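/- arXiv:math/0104137 — 2 statements merged into one kernel-verified Lean document; each statement's English description precedes it below -/
import Mathlib

section
/- For every integer k ≥ 2, the Bell numbers of order k satisfy the growth condition (1.2): limsup_{n→∞} ( (n!/b_k(n)) · inf_{x>0} G(x)/xⁿ )^{1/n} < ∞, where G(x) = Σ_{n≥0} (b_k(n)/n!)·xⁿ = exp_k(x)/exp_k(0). -/
/-!
Write `expIter k x = ∑ cₖ(n) xⁿ`. Then `bellOrd k n / n! = cₖ(n) / expIter k 0`, so the quantity
in (1.2) is `inf_{x>0} expIter k x / (cₖ(n) xⁿ)`; at `x = logIter (k - 1) n`, where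
`expIter k x = eⁿ`, it is at most `(e K)ⁿ` as soon as `cₖ(n) ≥ (K · logIter (k - 1) n)⁻ⁿ`.
This lower bound is proved by induction on `k`. For `k = 1` it is `1 / n! ≥ n⁻ⁿ`. Since
`expIter (k + 1) x = ∑ⱼ cₖ(j) e^{jx}`, we have `cₖ₊₁(n) ≥ cₖ(L) Lⁿ / n!` for every `L`, and the
choice `L ≈ n / log (K · logIter (k - 1) n)` turns the bound for `cₖ(L)` into the bound for
`cₖ₊₁(n)` with the constant `2e²`.
-/

open scoped Nat

/-- The `k`-times iterated exponential function: `expIter 0 = id`,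
`expIter (k+1) x = exp (expIter k x)`. -/
noncomputable def expIter : ℕ → ℝ → ℝ
  | 0 => id
  | k + 1 => fun x => Real.exp (expIter k x)

/-- `BellB k n` is the `n`-th derivative of the `k`-times iterated exponential at `0`,
so that `expIter k x = ∑ n, BellB k n * x ^ n / n !`. -/
noncomputable def BellB (k n : ℕ) : ℝ := iteratedDeriv n (expIter k) 0

/-- The Bell numbers of order `k`: `bellOrd k n = BellB k n / expIter k 0`. -/
noncomputable def bellOrd (k n : ℕ) : ℝ := BellB k n / expIter k 0

open Real Filter Asymptotics

theorem expIter_succ' (k : ℕ) (x : ℝ) : expIter (k + 1) x = expIter k (exp x) := by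
  induction k generalizing x with
  | zero => rfl
  | succ k ih => exact congrArg exp (ih x)

theorem expIter_strictMono (k : ℕ) : StrictMono (expIter k) := by
  induction k with
  | zero => exact strictMono_id
  | succ k ih => exact exp_strictMono.comp ih

theorem self_le_expIter (k : ℕ) (x : ℝ) : x ≤ expIter k x := by
  induction k with
  | zero => exact le_rfl
  | succ k ih => exact ih.trans ((le_add_of_nonneg_right zero_le_one).trans (add_one_le_exp _))

theorem Real.hasSum_pow_div_factorial (x : ℝ) : HasSum (fun n => x ^ n / n !) (exp x) :=
  exp_eq_exp_ℝ ▸ NormedSpace.expSeries_div_hasSum_exp x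

section PowerSeries

variable {a : ℕ → ℝ} {f : ℝ → ℝ}

theorem summable_mul_natCast_pow (ha : ∀ j, 0 ≤ a j)
    (hf : ∀ y, Summable fun j => a j * y ^ j) (n : ℕ) :
    Summable fun j : ℕ => a j * (j : ℝ) ^ n := by
  refine (hf (exp n)).of_nonneg_of_le (fun j => by have := ha j; positivity) fun j => ?_
  have hj : (j : ℝ) ≤ exp j := (le_add_of_nonneg_right zero_le_one).trans (add_one_le_exp _)
  calc a j * (j : ℝ) ^ n ≤ a j * exp j ^ n := by gcongr; exact ha j
    _ = a j * exp n ^ j := by rw [← exp_nat_mul, ← exp_nat_mul, mul_comm (j : ℝ)]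

/-- Fubini for `∑ⱼ ∑ₙ aⱼ (j x)ⁿ / n!`, absolutely convergent because `aⱼ ≥ 0`. -/
theorem hasSum_comp_exp (ha : ∀ j, 0 ≤ a j) (hf : ∀ y, HasSum (fun j => a j * y ^ j) (f y))
    (x : ℝ) :
    HasSum (fun n => (∑' j : ℕ, a j * (j : ℝ) ^ n / n !) * x ^ n) (f (exp x)) := by
  set F : ℕ × ℕ → ℝ := fun p => a p.1 * (p.1 * x) ^ p.2 / (p.2)!
  have hrow (y : ℝ) (j : ℕ) :
      HasSum (fun n => a j * (j * y) ^ n / n !) (a j * exp y ^ j) := by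
    rw [← exp_nat_mul]
    simpa only [mul_div_assoc] using (hasSum_pow_div_factorial (j * y)).mul_left (a j)
  have hF : Summable F := by
    have hnorm (p : ℕ × ℕ) : ‖F p‖ = a p.1 * (p.1 * |x|) ^ p.2 / (p.2)! := by
      simp only [F, norm_div, norm_mul, norm_pow, Real.norm_eq_abs, abs_of_nonneg (ha _),
        Nat.abs_cast]
    refine Summable.of_norm
      ((summable_prod_of_nonneg fun _ => norm_nonneg _).2 ⟨fun j => ?_, ?_⟩)
    · simpa only [hnorm] using (hrow |x| j).summable
    · simpa only [hnorm, (hrow |x| _).tsum_eq] using (hf (exp |x|)).summable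
  have hcol (n : ℕ) :
      HasSum (fun j => F (j, n)) ((∑' j : ℕ, a j * (j : ℝ) ^ n / n !) * x ^ n) := by
    have hterm : (fun j => F (j, n)) = fun j => a j * (j : ℝ) ^ n / n ! * x ^ n := by
      ext j
      simp only [F, mul_pow]
      ring
    rw [hterm]
    exact ((summable_mul_natCast_pow ha (fun y => (hf y).summable) n).div_const
      (n ! : ℝ)).hasSum.mul_right (x ^ n)
  have hval : ∑' p, F p = f (exp x) :=
    (hF.hasSum.prod_fiberwise fun j => hrow x j).unique (hf (exp x))
  rw [← hval]
  exact ((Equiv.prodComm ℕ ℕ).hasSum_iff.2 hF.hasSum).prod_fiberwise hcol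

theorem iteratedDeriv_zero_eq_factorial_mul (ha : ∀ n, 0 ≤ a n)
    (hf : ∀ x, HasSum (fun n => a n * x ^ n) (f x)) (n : ℕ) :
    iteratedDeriv n f 0 = n ! * a n := by
  have hp : HasFPowerSeriesOnBall f (FormalMultilinearSeries.ofScalars ℝ a) 0 ⊤ := by
    refine ⟨?_, ENNReal.zero_lt_top, fun {y} _ => ?_⟩
    · refine le_of_eq (FormalMultilinearSeries.radius_eq_top_of_summable_norm _ fun r => ?_).symm
      simpa only [FormalMultilinearSeries.ofScalars_norm, Real.norm_eq_abs, abs_of_nonneg (ha _)]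
        using (hf r).summable
    · simpa only [zero_add, FormalMultilinearSeries.ofScalars_apply_eq, smul_eq_mul] using hf y
  have hcoeff := congrArg (fun p => p.coeff n)
    (hp.hasFPowerSeriesAt.eq_formalMultilinearSeries hp.analyticAt.hasFPowerSeriesAt)
  simp only [FormalMultilinearSeries.coeff_ofScalars] at hcoeff
  rw [hcoeff]
  field_simp

end PowerSeries

/-- The Taylor coefficients of `expIter k` at `0`; the recursion comes from
`expIter (k + 1) x = ∑ⱼ expIterCoeff k j * exp (j * x)`. -/
noncomputable def expIterCoeff : ℕ → ℕ → ℝ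
  | 0 => fun n => if n = 1 then 1 else 0
  | k + 1 => fun n => ∑' j : ℕ, expIterCoeff k j * (j : ℝ) ^ n / n !

theorem expIterCoeff_nonneg (k n : ℕ) : 0 ≤ expIterCoeff k n := by
  induction k generalizing n with
  | zero => unfold expIterCoeff; split_ifs <;> norm_num
  | succ k ih => exact tsum_nonneg fun j => by have := ih j; positivity

theorem hasSum_expIterCoeff (k : ℕ) (x : ℝ) :
    HasSum (fun n => expIterCoeff k n * x ^ n) (expIter k x) := by
  induction k generalizing x with
  | zero =>
    convert hasSum_ite_eq 1 x using 1
    · ext n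
      simp only [expIterCoeff]
      split_ifs with h <;> simp [h]
    · rfl
  | succ k ih =>
    rw [expIter_succ']
    exact hasSum_comp_exp (expIterCoeff_nonneg k) ih x

theorem BellB_eq_factorial_mul_expIterCoeff (k n : ℕ) : BellB k n = n ! * expIterCoeff k n :=
  iteratedDeriv_zero_eq_factorial_mul (expIterCoeff_nonneg k) (hasSum_expIterCoeff k) n

theorem expIterCoeff_mul_pow_div_factorial_le (k n j : ℕ) :
    expIterCoeff k j * (j : ℝ) ^ n / n ! ≤ expIterCoeff (k + 1) n :=
  ((summable_mul_natCast_pow (expIterCoeff_nonneg k) (fun y => (hasSum_expIterCoeff k y).summable)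
    n).div_const _).le_tsum j fun i _ => by have := expIterCoeff_nonneg k i; positivity

noncomputable def logIter : ℕ → ℝ → ℝ
  | 0 => id
  | k + 1 => fun t => log (logIter k t)

theorem expIter_logIter {k : ℕ} {t : ℝ} (ht : expIter k 0 ≤ t) :
    expIter k (logIter k t) = t := by
  induction k generalizing t with
  | zero => rfl
  | succ k ih =>
    have hlt : expIter k 0 < t := by
      refine (expIter_strictMono k zero_lt_one).trans_le ?_
      rwa [expIter_succ', exp_zero] at ht
    have hk := ih hlt.le
    have hpos : 0 < logIter k t := (expIter_strictMono k).lt_iff_lt.1 (hlt.trans_eq hk.symm)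
    show expIter (k + 1) (log (logIter k t)) = t
    rw [expIter_succ', exp_log hpos, hk]

theorem le_logIter_iff {k : ℕ} {s t : ℝ} (ht : expIter k 0 ≤ t) :
    s ≤ logIter k t ↔ expIter k s ≤ t := by
  rw [← (expIter_strictMono k).le_iff_le, expIter_logIter ht]

theorem logIter_le_logIter {k : ℕ} {s t : ℝ} (hs : expIter k 0 ≤ s) (hst : s ≤ t) :
    logIter k s ≤ logIter k t :=
  (le_logIter_iff (hs.trans hst)).2 ((expIter_logIter hs).trans_le hst)

theorem tendsto_logIter_atTop (k : ℕ) : Tendsto (logIter k) atTop atTop := by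
  induction k with
  | zero => exact tendsto_id
  | succ k ih => exact tendsto_log_atTop.comp ih

theorem isLittleO_logIter_succ_id (k : ℕ) : logIter (k + 1) =o[atTop] id := by
  have hbig : logIter k =O[atTop] id := by
    refine IsBigO.of_bound 1 ?_
    filter_upwards [eventually_ge_atTop (expIter k 0)] with t ht
    have h0 : 0 ≤ logIter k t := (le_logIter_iff ht).2 ht
    have hle : logIter k t ≤ t := (self_le_expIter k _).trans_eq (expIter_logIter ht)
    simp only [Real.norm_eq_abs, id, one_mul, abs_of_nonneg h0, abs_of_nonneg (h0.trans hle), hle]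
  exact (isLittleO_log_id_atTop.comp_tendsto (tendsto_logIter_atTop k)).trans_isBigO hbig

theorem eventually_mul_add_logIter_succ_le (ℓ : ℕ) (M c : ℝ) :
    ∀ᶠ n : ℕ in atTop, M * (c + logIter (ℓ + 1) n) ≤ n := by
  have ho := (((isLittleO_const_id_atTop c).add (isLittleO_logIter_succ_id ℓ)).const_mul_left
    M).def one_pos
  refine tendsto_natCast_atTop_atTop.eventually
    (p := fun t => M * (c + logIter (ℓ + 1) t) ≤ t) ?_
  filter_upwards [ho, eventually_ge_atTop 0] with t ht ht0
  simp only [Real.norm_eq_abs, id, one_mul, abs_of_nonneg ht0] at ht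
  exact (le_abs_self _).trans ht

theorem one_le_pow_mul_expIterCoeff_succ {k n : ℕ} {y ξ : ℝ} (hy : 1 ≤ y)
    (hξ : log y + 1 ≤ 2 * ξ) (hn : log y + 1 ≤ n)
    (hL : ∀ L : ℕ, n / (log y + 1) ≤ L → L < n / (log y + 1) + 1 →
      1 ≤ y ^ L * expIterCoeff k L) :
    1 ≤ (2 * exp 2 * ξ) ^ n * expIterCoeff (k + 1) n := by
  set w := log y + 1
  have hw : 1 ≤ w := by linarith [log_nonneg hy]
  set L := ⌈(n : ℝ) / w⌉₊
  have hL1 : (n : ℝ) / w ≤ L := Nat.le_ceil _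
  have hL2 : (L : ℝ) < n / w + 1 := Nat.ceil_lt_add_one (by positivity)
  have hyL : y ^ L ≤ exp 2 ^ n := by
    have hLw : (L : ℝ) * w ≤ n + w := by
      calc (L : ℝ) * w ≤ (n / w + 1) * w := by gcongr
        _ = n + w := by field_simp
    rw [← exp_log (by linarith : 0 < y), ← exp_nat_mul, ← exp_nat_mul, exp_le_exp]
    nlinarith
  have hξ0 : 0 ≤ ξ := by linarith
  have hratio : 1 ≤ (2 * ξ * L) ^ n / n ! := by
    rw [one_le_div (by positivity)]
    have hnL : (n : ℝ) ≤ w * L := by rwa [div_le_iff₀ (by linarith), mul_comm] at hL1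
    calc (n ! : ℝ) ≤ (n : ℝ) ^ n := mod_cast Nat.factorial_le_pow n
      _ ≤ (2 * ξ * L) ^ n := by gcongr; nlinarith
  calc 1 ≤ y ^ L * expIterCoeff k L := hL L hL1 hL2
    _ ≤ exp 2 ^ n * ((2 * ξ * L) ^ n / n !) * expIterCoeff k L := by
      gcongr
      · exact expIterCoeff_nonneg k L
      · exact hyL.trans (le_mul_of_one_le_right (by positivity) hratio)
    _ = (2 * exp 2 * ξ) ^ n * (expIterCoeff k L * L ^ n / n !) := by ring
    _ ≤ (2 * exp 2 * ξ) ^ n * expIterCoeff (k + 1) n := by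
      gcongr
      exact expIterCoeff_mul_pow_div_factorial_le k n L

theorem exists_one_le_pow_mul_expIterCoeff (ℓ : ℕ) :
    ∃ K : ℝ, 1 ≤ K ∧
      ∀ᶠ n : ℕ in atTop, 1 ≤ (K * logIter ℓ n) ^ n * expIterCoeff (ℓ + 1) n := by
  induction ℓ with
  | zero =>
    refine ⟨1, le_rfl, Eventually.of_forall fun n => ?_⟩
    have h := expIterCoeff_mul_pow_div_factorial_le 0 n 1
    rw [show expIterCoeff 0 1 = 1 by simp [expIterCoeff], Nat.cast_one, one_pow, one_mul] at h
    calc (1 : ℝ) ≤ (n : ℝ) ^ n / n ! := by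
          rw [one_le_div (by positivity)]; exact mod_cast Nat.factorial_le_pow n
      _ ≤ (1 * logIter 0 n) ^ n * expIterCoeff 1 n := by
          rw [one_mul, div_eq_mul_inv, ← one_div]
          exact mul_le_mul_of_nonneg_left h (by positivity)
  | succ ℓ ih =>
    obtain ⟨K, hK, hev⟩ := ih
    obtain ⟨N, hN⟩ := eventually_atTop.1
      (hev.and (tendsto_natCast_atTop_atTop.eventually_ge_atTop (expIter ℓ 0)))
    refine ⟨2 * exp 2, by nlinarith [add_one_le_exp (2 : ℝ)], ?_⟩
    have hlogK : 0 ≤ log K := log_nonneg hK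
    filter_upwards [tendsto_natCast_atTop_atTop.eventually
        ((tendsto_logIter_atTop (ℓ + 1)).eventually_ge_atTop (log K + 1)),
      eventually_mul_add_logIter_succ_le ℓ (N + 1) (log K + 1),
      tendsto_natCast_atTop_atTop.eventually_ge_atTop (expIter (ℓ + 1) 0)] with n hξ hwn hn
    rw [expIter_succ', exp_zero] at hn
    have hE0 : expIter ℓ 0 ≤ n := ((expIter_strictMono ℓ).monotone zero_le_one).trans hn
    have hΞ : 1 ≤ logIter ℓ n := (le_logIter_iff hE0).2 hn
    set w := log K + 1 + logIter (ℓ + 1) n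
    have hlog : log (K * logIter ℓ n) + 1 = w := by
      rw [log_mul (by linarith) (by linarith)]
      simp only [w, logIter]
      ring
    have hw2 : 2 ≤ w := by linarith
    refine one_le_pow_mul_expIterCoeff_succ (y := K * logIter ℓ n)
      (one_le_mul_of_one_le_of_one_le hK hΞ) (by linarith) (by nlinarith) fun L hL1 hL2 => ?_
    rw [hlog] at hL1 hL2
    have hNL : N ≤ L := by
      have : (N : ℝ) + 1 ≤ n / w := by rw [le_div_iff₀ (by linarith)]; linarith
      exact_mod_cast (by linarith : (N : ℝ) ≤ L)
    have hLn : (L : ℝ) ≤ n := by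
      have : (n : ℝ) / w ≤ n / 2 := by gcongr
      nlinarith
    obtain ⟨hIH, hLE⟩ := hN L hNL
    have hζ : 0 ≤ logIter ℓ L := (le_logIter_iff hLE).2 hLE
    refine hIH.trans ?_
    gcongr
    · exact expIterCoeff_nonneg _ _
    · exact logIter_le_logIter hLE hLn

/-- The quantity bounded in growth condition (1.2): the saddle-point bound
`inf_{x>0} G x / x ^ n` divided by the coefficient `bellOrd k n / n!` of `G`. -/
noncomputable def saddleRatio (k n : ℕ) : ℝ :=
  (n ! / bellOrd k n) * ⨅ x : Set.Ioi (0 : ℝ), (expIter k x / expIter k 0) / (x : ℝ) ^ n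

theorem saddleRatio_nonneg (k n : ℕ) : 0 ≤ saddleRatio k n := by
  have hE0 : 0 ≤ expIter k 0 := le_rfl.trans (self_le_expIter k 0)
  have hB : 0 ≤ bellOrd k n := by
    rw [bellOrd, BellB_eq_factorial_mul_expIterCoeff]
    have := expIterCoeff_nonneg k n
    positivity
  refine mul_nonneg (by positivity) (Real.iInf_nonneg fun x => ?_)
  have hx : (0 : ℝ) < x := x.2
  have := hx.trans_le (self_le_expIter k x)
  positivity

theorem saddleRatio_le (ℓ n : ℕ) {x : ℝ} (hx : 0 < x) :
    saddleRatio (ℓ + 1) n ≤ expIter (ℓ + 1) x / (expIterCoeff (ℓ + 1) n * x ^ n) := by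
  have hE0 : 0 < expIter (ℓ + 1) 0 := exp_pos _
  have hinf : ⨅ y : Set.Ioi (0 : ℝ), (expIter (ℓ + 1) y / expIter (ℓ + 1) 0) / (y : ℝ) ^ n
      ≤ (expIter (ℓ + 1) x / expIter (ℓ + 1) 0) / x ^ n := by
    refine ciInf_le ⟨0, ?_⟩ (⟨x, hx⟩ : Set.Ioi (0 : ℝ))
    rintro _ ⟨y, rfl⟩
    have hy : (0 : ℝ) < y := y.2
    have := exp_pos (expIter ℓ y)
    positivity
  rw [saddleRatio, bellOrd, BellB_eq_factorial_mul_expIterCoeff]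
  have := expIterCoeff_nonneg (ℓ + 1) n
  calc _ ≤ n ! / (n ! * expIterCoeff (ℓ + 1) n / expIter (ℓ + 1) 0) *
        ((expIter (ℓ + 1) x / expIter (ℓ + 1) 0) / x ^ n) := by gcongr
    _ = expIter (ℓ + 1) x / (expIterCoeff (ℓ + 1) n * x ^ n) := by field_simp

theorem saddleRatio_le_pow {ℓ n : ℕ} {K : ℝ} (hK : 0 ≤ K) (hn : expIter ℓ 1 ≤ n)
    (hc : 1 ≤ (K * logIter ℓ n) ^ n * expIterCoeff (ℓ + 1) n) :
    saddleRatio (ℓ + 1) n ≤ (exp 1 * K) ^ n := by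
  have hE0 : expIter ℓ 0 ≤ n := ((expIter_strictMono ℓ).monotone zero_le_one).trans hn
  set ξ := logIter ℓ n
  have hξ : 1 ≤ ξ := (le_logIter_iff hE0).2 hn
  have hexp : expIter (ℓ + 1) ξ = exp 1 ^ n := by
    rw [exp_one_pow]
    exact congrArg exp (expIter_logIter hE0)
  have hpos : 0 < expIterCoeff (ℓ + 1) n * ξ ^ n :=
    mul_pos (pos_of_mul_pos_right (one_pos.trans_le hc) (by positivity)) (by positivity)
  refine (saddleRatio_le ℓ n (zero_lt_one.trans_le hξ)).trans ?_
  rw [hexp, div_le_iff₀ hpos]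
  calc exp 1 ^ n = exp 1 ^ n * 1 := (mul_one _).symm
    _ ≤ exp 1 ^ n * ((K * ξ) ^ n * expIterCoeff (ℓ + 1) n) := by gcongr
    _ = (exp 1 * K) ^ n * (expIterCoeff (ℓ + 1) n * ξ ^ n) := by ring

/-- For every integer `k ≥ 2`, the Bell numbers of order `k` satisfy growth condition (1.2):
`limsup_{n→∞} ((n! / bellOrd k n) * inf_{x>0} G x / x^n)^(1/n) < ∞`, where
`G x = expIter k x / expIter k 0`. -/
theorem bellOrd_growth_condition (k : ℕ) (hk : 2 ≤ k) :
    Filter.limsup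
      (fun n : ℕ =>
        (((((n ! : ℝ) / bellOrd k n) *
          ⨅ x : Set.Ioi (0 : ℝ), (expIter k x / expIter k 0) / (x : ℝ) ^ n) ^
            ((n : ℝ)⁻¹) : ℝ) : EReal))
      Filter.atTop < ⊤ := by
  obtain ⟨ℓ, rfl⟩ : ∃ ℓ, k = ℓ + 1 := ⟨k - 1, by omega⟩
  obtain ⟨K, hK, hgrowth⟩ := exists_one_le_pow_mul_expIterCoeff ℓ
  change limsup (fun n : ℕ => ((saddleRatio (ℓ + 1) n ^ (n : ℝ)⁻¹ : ℝ) : EReal))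
    atTop < ⊤
  refine (limsup_le_of_le (by isBoundedDefault) ?_).trans_lt (EReal.coe_lt_top (exp 1 * K))
  filter_upwards [hgrowth, tendsto_natCast_atTop_atTop.eventually_ge_atTop (expIter ℓ 1),
    eventually_ne_atTop 0] with n hgrowth_n hn hn0
  rw [EReal.coe_le_coe_iff, rpow_inv_le_iff_of_pos (saddleRatio_nonneg _ _) (by positivity)
    (by positivity), rpow_natCast]
  exact saddleRatio_le_pow (by linarith) hn hgrowth_n
end

section
/- For every integer k ≥ 2, the Bell numbers of order k satisfy the condition (3.1): limsup_{n→∞} ( b_k(n)·n! · inf_{x>0} H(x)/xⁿ )^{1/n} < ∞, where H(x) = Σ_{n≥0} xⁿ/(b_k(n)·n!) (this series converges for every real x). -/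
open scoped Nat

/-!
For `k ≥ 1`, `exp_k` is an exponential mixture `∑ᵢ wᵢ e^{λᵢ x}` with `wᵢ, λᵢ ≥ 0`: this holds
for `exp`, and is preserved by `f ↦ exp ∘ f` after expanding `exp (∑ᵢ aᵢ) = ∑ₙ (∑ᵢ aᵢ)ⁿ / n!`.
Hence `B_k(n) = ∑ᵢ wᵢ λᵢⁿ` is a moment sequence, log-convex by Cauchy–Schwarz and bounded below
by a positive constant (one of the `λᵢ` is `1`). So `A n = b_k(n) n!` is log-convex and
`A n ≥ δ n!`; the latter makes `H` entire, and testing `H(x) / xⁿ` at `x = A (n+1) / (2 A n)`,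
where log-convexity makes `xᵐ / A m` geometrically decaying away from `m = n`, gives
`A n · inf H(x) / xⁿ ≤ 2ⁿ⁺¹`.
-/

open Real
open scoped NNReal ENNReal

/-- For positive sequences this is log-convexity; positivity is assumed separately. -/
def IsLogConvexSeq (a : ℕ → ℝ) : Prop :=
  ∀ n, a (n + 1) ^ 2 ≤ a n * a (n + 2)

namespace IsLogConvexSeq

variable {a b : ℕ → ℝ}

theorem mul (ha : IsLogConvexSeq a) (hb : IsLogConvexSeq b) :
    IsLogConvexSeq fun n => a n * b n := fun n =>
  calc (a (n + 1) * b (n + 1)) ^ 2 = a (n + 1) ^ 2 * b (n + 1) ^ 2 := mul_pow _ _ _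
    _ ≤ (a n * a (n + 2)) * (b n * b (n + 2)) :=
      mul_le_mul (ha n) (hb n) (sq_nonneg _) ((sq_nonneg _).trans (ha n))
    _ = a n * b n * (a (n + 2) * b (n + 2)) := by ring

theorem div_const (ha : IsLogConvexSeq a) (c : ℝ) : IsLogConvexSeq fun n => a n / c := fun n => by
  rw [div_pow, div_mul_div_comm, ← sq]
  exact div_le_div_of_nonneg_right (ha n) (sq_nonneg c)

theorem monotone_succ_div (ha : IsLogConvexSeq a) (hpos : ∀ n, 0 < a n) :
    Monotone fun n => a (n + 1) / a n :=
  monotone_nat_of_le_succ fun n => by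
    rw [div_le_div_iff₀ (hpos n) (hpos (n + 1))]
    nlinarith [ha n]

end IsLogConvexSeq

theorem isLogConvexSeq_factorial : IsLogConvexSeq fun n => (n ! : ℝ) := fun n => by
  have : (0 : ℝ) ≤ n ! := by positivity
  simp only [Nat.factorial_succ, Nat.cast_mul, Nat.cast_add, Nat.cast_one]
  nlinarith

theorem tsum_sq_le_tsum_mul_tsum {ι : Type*} {r f g : ι → ℝ} (hf : ∀ i, 0 ≤ f i)
    (hg : ∀ i, 0 ≤ g i) (hrfg : ∀ i, r i ^ 2 ≤ f i * g i) (hr : Summable r) (hfs : Summable f)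
    (hgs : Summable g) : (∑' i, r i) ^ 2 ≤ (∑' i, f i) * ∑' i, g i := by
  refine le_of_tendsto (hr.hasSum.pow 2) (Filter.Eventually.of_forall fun s => ?_)
  exact (Finset.sum_sq_le_sum_mul_sum_of_sq_le_mul s (fun i _ => hf i) (fun i _ => hg i)
    fun i _ => hrfg i).trans (mul_le_mul (hfs.sum_le_tsum s fun i _ => hf i)
      (hgs.sum_le_tsum s fun i _ => hg i) (Finset.sum_nonneg fun i _ => hg i) (tsum_nonneg hf))

theorem ENNReal.tsum_fin_prod_eq_pow {ι : Type*} (G : ι → ℝ≥0∞) (n : ℕ) :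
    ∑' v : Fin n → ι, ∏ j, G (v j) = (∑' i, G i) ^ n := by
  induction n with
  | zero => simp
  | succ n ih =>
    rw [← (Fin.consEquiv fun _ => ι).tsum_eq, ENNReal.tsum_prod', pow_succ', ← ih,
      ← ENNReal.tsum_mul_right]
    simp [Fin.consEquiv, Fin.prod_univ_succ, ENNReal.tsum_mul_left]

theorem hasSum_of_tsum_ofReal_eq {α : Type*} {f : α → ℝ} (hf : ∀ i, 0 ≤ f i) {r : ℝ}
    (hr : 0 ≤ r) (h : ∑' i, ENNReal.ofReal (f i) = ENNReal.ofReal r) : HasSum f r := by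
  lift f to α → ℝ≥0 using hf
  lift r to ℝ≥0 using hr
  simp only [ENNReal.ofReal_coe_nnreal] at h
  exact NNReal.hasSum_coe.2 (ENNReal.hasSum_coe.1 (h ▸ ENNReal.summable.hasSum))

theorem hasSum_sigma_prod_div_factorial {ι : Type*} {a : ι → ℝ} (ha : ∀ i, 0 ≤ a i) {S : ℝ}
    (h : HasSum a S) :
    HasSum (fun p : Σ n, Fin n → ι => (∏ j, a (p.2 j)) / p.1 !) (exp S) := by
  have hS : ∑' i, ENNReal.ofReal (a i) = ENNReal.ofReal S := by
    rw [← ENNReal.ofReal_tsum_of_nonneg ha h.summable, h.tsum_eq]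
  have hS0 : 0 ≤ S := h.nonneg ha
  have hexp := NormedSpace.expSeries_div_hasSum_exp S
  rw [← Real.exp_eq_exp_ℝ] at hexp
  refine hasSum_of_tsum_ofReal_eq (fun p => div_nonneg (Finset.prod_nonneg fun j _ => ha _)
    (by positivity)) (exp_pos S).le ?_
  have hofReal : ∀ n (v : Fin n → ι), ENNReal.ofReal ((∏ j, a (v j)) / n !) =
      (∏ j, ENNReal.ofReal (a (v j))) / n ! := by
    intro n v
    rw [ENNReal.ofReal_div_of_pos (by positivity), ENNReal.ofReal_prod_of_nonneg fun j _ => ha _,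
      ENNReal.ofReal_natCast]
  rw [← hexp.tsum_eq, ENNReal.ofReal_tsum_of_nonneg (fun n => by positivity) hexp.summable,
    ENNReal.tsum_sigma']
  congr 1 with n
  simp_rw [hofReal, div_eq_mul_inv, ENNReal.tsum_mul_right]
  rw [ENNReal.tsum_fin_prod_eq_pow (fun i => ENNReal.ofReal (a i)), hS,
    ENNReal.ofReal_mul (by positivity), ENNReal.ofReal_pow hS0,
    ENNReal.ofReal_inv_of_pos (by positivity), ENNReal.ofReal_natCast]

structure IsExpMixture {ι : Type*} (w lam : ι → ℝ) (f : ℝ → ℝ) : Prop where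
  weight_nonneg : ∀ i, 0 ≤ w i
  rate_nonneg : ∀ i, 0 ≤ lam i
  hasSum : ∀ x, HasSum (fun i => w i * exp (lam i * x)) (f x)

namespace IsExpMixture

variable {ι : Type*} {w lam : ι → ℝ} {f : ℝ → ℝ}

theorem weight_mul_pow_nonneg (hf : IsExpMixture w lam f) (n : ℕ) (i : ι) :
    0 ≤ w i * lam i ^ n :=
  mul_nonneg (hf.weight_nonneg i) (pow_nonneg (hf.rate_nonneg i) n)

theorem summable_mul_pow (hf : IsExpMixture w lam f) (n : ℕ) (x : ℝ) :
    Summable fun i => w i * lam i ^ n * exp (lam i * x) := by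
  refine .of_nonneg_of_le (fun i => ?_) (fun i => ?_)
    (((hf.hasSum (x + 1)).summable).mul_left (n ! : ℝ))
  · exact mul_nonneg (hf.weight_mul_pow_nonneg n i) (exp_pos _).le
  · have hpow : lam i ^ n ≤ n ! * exp (lam i) := by
      have := pow_div_factorial_le_exp _ (hf.rate_nonneg i) n
      rwa [div_le_iff₀' (by positivity)] at this
    calc w i * lam i ^ n * exp (lam i * x)
        ≤ w i * (n ! * exp (lam i)) * exp (lam i * x) := by
          gcongr
          exact hf.weight_nonneg i
      _ = n ! * (w i * exp (lam i * (x + 1))) := by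
          rw [mul_add, mul_one, exp_add]; ring

theorem hasSum_iteratedDeriv (hf : IsExpMixture w lam f) (n : ℕ) (x : ℝ) :
    HasSum (fun i => w i * lam i ^ n * exp (lam i * x)) (iteratedDeriv n f x) := by
  induction n generalizing x with
  | zero => simpa using hf.hasSum x
  | succ n ih =>
    have hderiv : ∀ i y, HasDerivAt (fun z => w i * lam i ^ n * exp (lam i * z))
        (w i * lam i ^ (n + 1) * exp (lam i * y)) y := fun i y => by
      refine ((((hasDerivAt_id' y).const_mul (lam i)).exp).const_mul
        (w i * lam i ^ n)).congr_deriv ?_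
      ring
    have hbound : ∀ i, ∀ y ∈ Set.Ioo (x - 1) (x + 1),
        ‖w i * lam i ^ (n + 1) * exp (lam i * y)‖ ≤
          w i * lam i ^ (n + 1) * exp (lam i * (x + 1)) := fun i y hy => by
      have := hf.weight_mul_pow_nonneg (n + 1) i
      rw [Real.norm_of_nonneg (by positivity)]
      gcongr
      · exact hf.rate_nonneg i
      · exact hy.2.le
    have hx : x ∈ Set.Ioo (x - 1) (x + 1) := ⟨by linarith, by linarith⟩
    have key := hasDerivAt_tsum_of_isPreconnected (hf.summable_mul_pow (n + 1) (x + 1))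
      isOpen_Ioo isPreconnected_Ioo (fun i y _ => hderiv i y) hbound hx
      (hf.summable_mul_pow n x) hx
    rw [iteratedDeriv_succ, show iteratedDeriv n f = _ from funext fun y => (ih y).tsum_eq.symm,
      key.deriv]
    exact (hf.summable_mul_pow (n + 1) x).hasSum

theorem exp_comp (hf : IsExpMixture w lam f) :
    IsExpMixture (fun p : Σ n, Fin n → ι => (∏ j, w (p.2 j)) / p.1 !)
      (fun p => ∑ j, lam (p.2 j)) (fun x => exp (f x)) where
  weight_nonneg p := div_nonneg (Finset.prod_nonneg fun j _ => hf.weight_nonneg _) (by positivity)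
  rate_nonneg p := Finset.sum_nonneg fun j _ => hf.rate_nonneg _
  hasSum x := by
    convert hasSum_sigma_prod_div_factorial (fun i => ?_) (hf.hasSum x) using 2 with p
    · rw [Finset.prod_mul_distrib, Finset.sum_mul, exp_sum]; ring
    · have := hf.weight_nonneg i; positivity

theorem hasSum_iteratedDeriv_zero (hf : IsExpMixture w lam f) (n : ℕ) :
    HasSum (fun i => w i * lam i ^ n) (iteratedDeriv n f 0) := by
  simpa using hf.hasSum_iteratedDeriv n 0

theorem le_iteratedDeriv_zero (hf : IsExpMixture w lam f) {i : ι} (hi : 1 ≤ lam i) (n : ℕ) :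
    w i ≤ iteratedDeriv n f 0 :=
  calc w i ≤ w i * lam i ^ n := le_mul_of_one_le_right (hf.weight_nonneg i) (one_le_pow₀ hi)
    _ ≤ iteratedDeriv n f 0 :=
      le_hasSum (hf.hasSum_iteratedDeriv_zero n) i fun j _ => hf.weight_mul_pow_nonneg n j

theorem isLogConvexSeq_iteratedDeriv_zero (hf : IsExpMixture w lam f) :
    IsLogConvexSeq fun n => iteratedDeriv n f 0 := fun n => by
  dsimp only
  have hmoment := hf.hasSum_iteratedDeriv_zero
  rw [← (hmoment n).tsum_eq, ← (hmoment (n + 1)).tsum_eq, ← (hmoment (n + 2)).tsum_eq]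
  exact tsum_sq_le_tsum_mul_tsum (hf.weight_mul_pow_nonneg n) (hf.weight_mul_pow_nonneg (n + 2))
    (fun i => le_of_eq (by ring)) (hmoment _).summable (hmoment _).summable (hmoment _).summable

end IsExpMixture

theorem exists_isExpMixture_expIter (k : ℕ) :
    ∃ (ι : Type) (w lam : ι → ℝ), IsExpMixture w lam (expIter (k + 1)) ∧
      ∃ i, 0 < w i ∧ 1 ≤ lam i := by
  induction k with
  | zero =>
    refine ⟨Unit, 1, 1, ⟨fun _ => zero_le_one, fun _ => zero_le_one, fun x => ?_⟩,
      (), one_pos, le_rfl⟩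
    simp [expIter]
  | succ k ih =>
    obtain ⟨ι, w, lam, hf, i, hwi, hlami⟩ := ih
    exact ⟨_, _, _, hf.exp_comp, ⟨1, fun _ => i⟩, by simpa using hwi, by simpa using hlami⟩

section TestCondition

variable {A : ℕ → ℝ}

theorem summable_pow_div_of_mul_factorial_le {δ : ℝ} (hδ : 0 < δ) (hA : ∀ n, δ * n ! ≤ A n)
    (x : ℝ) : Summable fun n => x ^ n / A n := by
  refine Summable.of_norm_bounded ((Real.summable_pow_div_factorial |x|).div_const δ) fun n => ?_
  have hδn : 0 < δ * n ! := by positivity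
  rw [norm_div, norm_pow, Real.norm_eq_abs, Real.norm_of_nonneg (hδn.le.trans (hA n)), div_div,
    mul_comm]
  exact div_le_div_of_nonneg_left (by positivity) hδn (hA n)

theorem tsum_pow_div_div_pow_nonneg (hA : ∀ n, 0 ≤ A n) {x : ℝ} (hx : 0 ≤ x) (n : ℕ) :
    0 ≤ (∑' m, x ^ m / A m) / x ^ n :=
  div_nonneg (tsum_nonneg fun m => div_nonneg (pow_nonneg hx m) (hA m)) (pow_nonneg hx n)

theorem mul_pow_le_mul_pow_of_monotone_succ_div (hA : ∀ n, 0 < A n)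
    (hmono : Monotone fun n => A (n + 1) / A n) (n m : ℕ) :
    A n * (A (n + 1) / A n) ^ m ≤ A m * (A (n + 1) / A n) ^ n := by
  set y := A (n + 1) / A n
  have hy : 0 < y := div_pos (hA (n + 1)) (hA n)
  have hstep : ∀ m, A m * (A (m + 1) / A m) = A (m + 1) := fun m =>
    mul_div_cancel₀ _ (hA m).ne'
  rcases le_total n m with hnm | hmn
  · induction m, hnm using Nat.le_induction with
    | base => exact le_rfl
    | succ m hnm ih =>
      calc A n * y ^ (m + 1) = A n * y ^ m * y := by ring
        _ ≤ A m * y ^ n * (A (m + 1) / A m) :=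
          mul_le_mul ih (hmono hnm) hy.le (mul_nonneg (hA m).le (pow_nonneg hy.le n))
        _ = A (m + 1) * y ^ n := by rw [mul_right_comm, hstep m]
  · induction hmn using Nat.decreasingInduction with
    | self => exact le_rfl
    | of_succ m hmn ih =>
      refine le_of_mul_le_mul_right ?_ hy
      calc A n * y ^ m * y = A n * y ^ (m + 1) := by ring
        _ ≤ A (m + 1) * y ^ n := ih
        _ = A m * (A (m + 1) / A m) * y ^ n := by rw [hstep m]
        _ ≤ A m * y * y ^ n := by gcongr; exacts [(hA m).le, hmono hmn.le]
        _ = A m * y ^ n * y := by ring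

theorem mul_iInf_tsum_div_pow_le (hA : ∀ n, 0 < A n) (hmono : Monotone fun n => A (n + 1) / A n)
    (hsum : ∀ x, Summable fun n => x ^ n / A n) (n : ℕ) :
    A n * ⨅ x : Set.Ioi (0 : ℝ), (∑' m, (x : ℝ) ^ m / A m) / (x : ℝ) ^ n ≤ 2 ^ (n + 1) := by
  set y := A (n + 1) / A n
  have hy : 0 < y := div_pos (hA (n + 1)) (hA n)
  have hmax : ∀ m, y ^ m / A m ≤ y ^ n / A n := fun m => by
    rw [div_le_div_iff₀ (hA m) (hA n)]
    linarith [mul_pow_le_mul_pow_of_monotone_succ_div hA hmono n m]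
  clear_value y
  have hterm : ∀ m, (y / 2) ^ m / A m ≤ y ^ n / A n * (1 / 2) ^ m := fun m =>
    calc (y / 2) ^ m / A m = y ^ m / A m * (1 / 2) ^ m := by ring
      _ ≤ y ^ n / A n * (1 / 2) ^ m := mul_le_mul_of_nonneg_right (hmax m) (by positivity)
  have htsum : ∑' m, (y / 2) ^ m / A m ≤ y ^ n / A n * 2 := by
    refine ((hsum _).tsum_le_tsum hterm (summable_geometric_two.mul_left _)).trans_eq ?_
    rw [tsum_mul_left, tsum_geometric_two]
  have hbdd : BddBelow (Set.range fun x : Set.Ioi (0 : ℝ) =>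
      (∑' m, (x : ℝ) ^ m / A m) / (x : ℝ) ^ n) :=
    ⟨0, by rintro _ ⟨x, rfl⟩; exact tsum_pow_div_div_pow_nonneg (fun m => (hA m).le) x.2.le n⟩
  have hAn := (hA n).le
  calc A n * ⨅ x : Set.Ioi (0 : ℝ), (∑' m, (x : ℝ) ^ m / A m) / (x : ℝ) ^ n
      ≤ A n * ((∑' m, (y / 2) ^ m / A m) / (y / 2) ^ n) := by
        gcongr
        exact ciInf_le hbdd ⟨y / 2, half_pos hy⟩
    _ ≤ A n * (y ^ n / A n * 2 / (y / 2) ^ n) := by gcongr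
    _ = 2 ^ (n + 1) := by
        have := (hA n).ne'
        have := (pow_pos hy n).ne'
        rw [div_pow y, div_div_eq_mul_div, pow_succ]
        field_simp

theorem IsLogConvexSeq.limsup_rpow_mul_iInf_lt_top (hconv : IsLogConvexSeq A)
    (hA : ∀ n, 0 < A n) (hsum : ∀ x, Summable fun n => x ^ n / A n) :
    Filter.limsup (fun n : ℕ =>
      (((A n * ⨅ x : Set.Ioi (0 : ℝ), (∑' m : ℕ, (x : ℝ) ^ m / A m) / (x : ℝ) ^ n) ^
        ((n : ℝ)⁻¹) : ℝ) : EReal)) Filter.atTop < ⊤ := by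
  refine lt_of_le_of_lt (Filter.limsup_le_of_le (by isBoundedDefault) ?_) (EReal.coe_lt_top 4)
  filter_upwards [Filter.eventually_ge_atTop 1] with n hn
  have hinf : 0 ≤ ⨅ x : Set.Ioi (0 : ℝ), (∑' m : ℕ, (x : ℝ) ^ m / A m) / (x : ℝ) ^ n :=
    le_ciInf fun x => tsum_pow_div_div_pow_nonneg (fun m => (hA m).le) x.2.le n
  have hpow : (2 : ℝ) ^ (n + 1) ≤ 4 ^ n := by
    rw [show (4 : ℝ) = 2 ^ 2 by norm_num, ← pow_mul]
    exact pow_le_pow_right₀ (by norm_num) (by omega)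
  refine EReal.coe_le_coe_iff.2 (le_of_le_of_eq (rpow_le_rpow (mul_nonneg (hA n).le hinf)
    ((mul_iInf_tsum_div_pow_le hA (hconv.monotone_succ_div hA) hsum n).trans hpow)
    (by positivity)) ?_)
  exact pow_rpow_inv_natCast (by norm_num) (by omega)

end TestCondition

/-- For every integer `k ≥ 2`, the Bell numbers of order `k` satisfy condition (3.1):
the series `H x = ∑_{n≥0} x^n / (bellOrd k n * n!)` converges for every real `x`, and
`limsup_{n→∞} (bellOrd k n * n! * inf_{x>0} H x / x^n)^(1/n) < ∞`. -/
theorem bellOrd_test_condition (k : ℕ) (hk : 2 ≤ k) :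
    (∀ x : ℝ, Summable fun n : ℕ => x ^ n / (bellOrd k n * (n ! : ℝ))) ∧
    Filter.limsup
      (fun n : ℕ =>
        (((bellOrd k n * (n ! : ℝ) *
          ⨅ x : Set.Ioi (0 : ℝ),
            (∑' m : ℕ, (x : ℝ) ^ m / (bellOrd k m * (m ! : ℝ))) / (x : ℝ) ^ n) ^
              ((n : ℝ)⁻¹) : ℝ) : EReal))
      Filter.atTop < ⊤ := by
  obtain ⟨k, rfl⟩ : ∃ j, k = j + 1 := ⟨k - 1, by omega⟩
  obtain ⟨ι, w, lam, hf, i, hwi, hlami⟩ := exists_isExpMixture_expIter k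
  have hE : 0 < expIter (k + 1) 0 :=
    hwi.trans_le (by simpa using hf.le_iteratedDeriv_zero hlami 0)
  have hδ : 0 < w i / expIter (k + 1) 0 := div_pos hwi hE
  have hlow : ∀ n, w i / expIter (k + 1) 0 * n ! ≤ bellOrd (k + 1) n * n ! := fun n => by
    unfold bellOrd BellB
    gcongr
    exact hf.le_iteratedDeriv_zero hlami n
  have hsum := summable_pow_div_of_mul_factorial_le hδ hlow
  have hpos : ∀ n, 0 < bellOrd (k + 1) n * n ! := fun n =>
    (mul_pos hδ (by positivity)).trans_le (hlow n)
  have hconv : IsLogConvexSeq fun n => bellOrd (k + 1) n * n ! :=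
    (hf.isLogConvexSeq_iteratedDeriv_zero.div_const _).mul isLogConvexSeq_factorial
  exact ⟨hsum, hconv.limsup_rpow_mul_iInf_lt_top hpos hsum⟩
end
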